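/- arXiv:math-ph/0210043 — 3 statements merged into one kernel-verified Lean document; each statement's English description precedes it below -/
import Mathlib

section
/- (Crainic's lemma) Let H be a Hopf algebra with character δ : H → k and twisted antipode S_δ = δ * S. Then S_δ ∘ S_δ = id_H if and only if Σ S_δ(h₍₁₎) h₍₀₎ = δ(h)·1 for all h ∈ H. -/
open TensorProduct

/-- The twisted antipode `S_δ = δ * S` (convolution of the character `δ` with the
antipode `S`), i.e. `S_δ(h) = Σ δ(h₍₀₎) S(h₍₁₎)`. -/
noncomputable def twistedAntipode {k H : Type*} [CommRing k] [Ring H]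
    [HopfAlgebra k H] (δ : H →ₐ[k] k) : H →ₗ[k] H :=
  (TensorProduct.lid k H).toLinearMap ∘ₗ
    (TensorProduct.map δ.toLinearMap (HopfAlgebra.antipode (R := k))) ∘ₗ
    Coalgebra.comul

/-!
Let `δ̂ = η ∘ δ`. In the convolution algebra of `End_k(H)`, `S_δ = δ̂ ⋆ S` is invertible
(`δ̂ ⋆ (δ̂ ∘ S) = ε` and `S ⋆ id = ε`), and `S_δ ⋆ id = δ̂`. Since `S_δ = S ∘ τ` for the left
winding automorphism `τ` of `δ`, `S_δ` is unital and antimultiplicative, so applying it to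
`T(h) = Σ S_δ(h₍₁₎) h₍₀₎` gives `S_δ ∘ T = S_δ ⋆ S_δ²`, while `S_δ ∘ δ̂ = δ̂ = S_δ ⋆ id`.
If `T = δ̂`, cancelling the unit `S_δ` gives `S_δ² = id`; conversely, if `S_δ² = id` then
`T = S_δ ∘ (S_δ ⋆ id) = S_δ ∘ δ̂ = δ̂`.
-/

open Coalgebra HopfAlgebra WithConv

section Convolution

variable {R A B : Type*} [CommSemiring R] [Semiring A] [HopfAlgebra R A] [Semiring B]
  [Algebra R B]

lemma LinearMap.isUnit_toConv_antipode : IsUnit (toConv (antipode R (A := A))) :=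
  ⟨⟨_, _, LinearMap.antipode_mul_id, LinearMap.id_mul_antipode⟩, rfl⟩

lemma AlgHom.isUnit_toConv (φ : A →ₐ[R] B) : IsUnit (toConv φ.toLinearMap) := by
  refine ⟨⟨_, toConv (φ.toLinearMap ∘ₗ antipode R), ?_, ?_⟩, rfl⟩
  · have h := LinearMap.algHom_comp_convMul_distrib φ (toConv LinearMap.id) (toConv (antipode R))
    rw [LinearMap.id_mul_antipode] at h
    ext a
    simpa using (LinearMap.congr_fun h a).symm
  · have h := LinearMap.algHom_comp_convMul_distrib φ (toConv (antipode R)) (toConv LinearMap.id)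
    rw [LinearMap.antipode_mul_id] at h
    ext a
    simpa using (LinearMap.congr_fun h a).symm

end Convolution

section Antimultiplicative

variable {R A : Type*} [CommSemiring R] [Semiring A] [Bialgebra R A]

lemma LinearMap.apply_mul'_rTensor_comm_comul {f : A →ₗ[R] A}
    (hf : ∀ x y, f (x * y) = f y * f x) (g : A →ₗ[R] A) (a : A) :
    f (LinearMap.mul' R A (g.rTensor A (TensorProduct.comm R A A (comul a)))) =
      (toConv f * toConv (f ∘ₗ g)) a := by
  rw [(ℛ R a).convMul_apply, ← (ℛ R a).eq]
  simp [hf]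

end Antimultiplicative

/-- The left winding map `h ↦ Σ δ(h₍₀₎) h₍₁₎` of a character `δ`. -/
noncomputable def Bialgebra.leftWinding {R A : Type*} [CommSemiring R] [Semiring A]
    [Bialgebra R A] (δ : A →ₐ[R] R) : A →ₐ[R] A :=
  (Algebra.TensorProduct.lid R A).toAlgHom.comp
    ((Algebra.TensorProduct.map δ (AlgHom.id R A)).comp (Bialgebra.comulAlgHom R A))

section TwistedAntipode

variable {k H : Type*} [CommRing k] [Ring H] [HopfAlgebra k H] (δ : H →ₐ[k] k)

lemma twistedAntipode_eq_antipode_comp_leftWinding :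
    twistedAntipode δ = antipode k ∘ₗ (Bialgebra.leftWinding δ).toLinearMap := by
  ext h
  simp [twistedAntipode, Bialgebra.leftWinding, ← (ℛ k h).eq]

lemma toConv_twistedAntipode :
    toConv (twistedAntipode δ) =
      toConv ((Algebra.ofId k H).comp δ).toLinearMap * toConv (antipode k) := by
  ext h
  simp [twistedAntipode, (ℛ k h).convMul_apply, ← (ℛ k h).eq, Algebra.smul_def]

lemma twistedAntipode_mul (x y : H) :
    twistedAntipode δ (x * y) = twistedAntipode δ y * twistedAntipode δ x := by
  simp [twistedAntipode_eq_antipode_comp_leftWinding, antipode_mul_antidistrib]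

lemma twistedAntipode_algebraMap (c : k) :
    twistedAntipode δ (algebraMap k H c) = algebraMap k H c := by
  simp [twistedAntipode_eq_antipode_comp_leftWinding, Algebra.algebraMap_eq_smul_one]

lemma isUnit_toConv_twistedAntipode : IsUnit (toConv (twistedAntipode δ)) := by
  rw [toConv_twistedAntipode]
  exact ((Algebra.ofId k H).comp δ).isUnit_toConv.mul LinearMap.isUnit_toConv_antipode

lemma toConv_twistedAntipode_mul_id :
    toConv (twistedAntipode δ) * toConv LinearMap.id =
      toConv ((Algebra.ofId k H).comp δ).toLinearMap := by
  rw [toConv_twistedAntipode, mul_assoc, LinearMap.antipode_mul_id, mul_one]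

end TwistedAntipode

/-- (Crainic's lemma) `S_δ ∘ S_δ = id` iff `Σ S_δ(h₍₁₎) h₍₀₎ = δ(h)·1` for all `h`. -/
theorem twistedAntipode_involutive_iff {k H : Type*} [Field k] [Ring H]
    [HopfAlgebra k H] (δ : H →ₐ[k] k) :
    twistedAntipode δ ∘ₗ twistedAntipode δ = LinearMap.id ↔
      ∀ h : H, LinearMap.mul' k H ((twistedAntipode δ).rTensor H
          ((TensorProduct.comm k H H) (Coalgebra.comul h))) = δ h • (1 : H) := by
  set S := twistedAntipode δ
  set T : H → H := fun h ↦ LinearMap.mul' k H (S.rTensor H (TensorProduct.comm k H H (comul h)))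
  have hST (h : H) : S (T h) = (toConv S * toConv (S ∘ₗ S)) h :=
    LinearMap.apply_mul'_rTensor_comm_comul (twistedAntipode_mul δ) S h
  have hSid (h : H) : S (δ h • 1) = (toConv S * toConv (LinearMap.id : H →ₗ[k] H)) h := by
    rw [toConv_twistedAntipode_mul_id, ← Algebra.algebraMap_eq_smul_one]
    exact twistedAntipode_algebraMap δ (δ h)
  constructor
  · intro hinv h
    calc T h = S (S (T h)) := (LinearMap.congr_fun hinv _).symm
      _ = S (S (δ h • 1)) := by rw [hST, hinv, ← hSid]
      _ = δ h • 1 := LinearMap.congr_fun hinv _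
  · intro hT
    have hconv : toConv S * toConv (S ∘ₗ S) = toConv S * toConv LinearMap.id := by
      ext h
      rw [← hST, ← hSid]
      exact congrArg S (hT h)
    exact toConv_injective ((isUnit_toConv_twistedAntipode δ).mul_left_cancel hconv)
end

section
/- Let (R, δ) be a ℤ/2-graded associative algebra with odd derivation δ, δ² = 0, and let A ∈ R be an odd element with curvature F = δA + A². Suppose F is nilpotent (or work in a completion where exp converges), and set e^{−F} = Σ_{n≥0} (−1)ⁿ Fⁿ/n!. Then δ(e^{−F}) = [e^{−F}, A] = e^{−F}A − A e^{−F}. -/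
/-! Because δ² = 0, the Bianchi identity says that δ acts on the curvature `F` as the
commutator `x ↦ x A - A x`. Since `F` is even, the Leibniz rule propagates this to every
power `Fⁿ`, and both sides are ℚ-linear, so it holds for any polynomial in `F`, in particular
for the truncated exponential series. -/

section

variable {R D : Type*} [Ring R] [FunLike D R R] (δ : D)

theorem curvature_bianchi [AddMonoidHomClass D R R] (hd2 : ∀ x, δ (δ x) = 0) {A : R}
    (hA : δ (A * A) = δ A * A - A * δ A) :
    δ (δ A + A * A) = (δ A + A * A) * A - A * (δ A + A * A) := by
  rw [map_add, hd2, hA, zero_add]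
  noncomm_ring

theorem map_pow_eq_mul_sub_mul {A F : R} (h1 : δ 1 = 0) (hF : δ F = F * A - A * F)
    (hleib : ∀ y, δ (F * y) = δ F * y + F * δ y) (n : ℕ) :
    δ (F ^ n) = F ^ n * A - A * F ^ n := by
  induction n with
  | zero => simp [h1]
  | succ k ih =>
    rw [pow_succ', hleib, hF, ih]
    noncomm_ring

end

theorem delta_exp_curvature_general {R : Type*} [Ring R] [Algebra ℚ R] (δ : R →ₗ[ℚ] R)
    (Ev Od : R → Prop)
    (hd2 : ∀ x : R, δ (δ x) = 0)
    (hE1 : Ev 1)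
    (hLeibE : ∀ x y : R, Ev x → δ (x * y) = δ x * y + x * δ y)
    (hLeibO : ∀ x y : R, Od x → δ (x * y) = δ x * y - x * δ y)
    (A : R) (hA : Od A) (hF : Ev (δ A + A * A))
    (N : ℕ) :
    δ (∑ n ∈ Finset.range N, ((-1 : ℚ) ^ n * (n.factorial : ℚ)⁻¹) • (δ A + A * A) ^ n) =
      (∑ n ∈ Finset.range N, ((-1 : ℚ) ^ n * (n.factorial : ℚ)⁻¹) • (δ A + A * A) ^ n) * A -
        A * ∑ n ∈ Finset.range N, ((-1 : ℚ) ^ n * (n.factorial : ℚ)⁻¹) • (δ A + A * A) ^ n := by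
  have h1 : δ 1 = 0 := by simpa using hLeibE 1 1 hE1
  have hbianchi := curvature_bianchi δ hd2 (hLeibO A A hA)
  have hpow := map_pow_eq_mul_sub_mul δ h1 hbianchi (hLeibE _ · hF)
  rw [map_sum, Finset.sum_mul, Finset.mul_sum, ← Finset.sum_sub_distrib]
  refine Finset.sum_congr rfl fun n _ => ?_
  rw [map_smul, hpow n, smul_sub, smul_mul_assoc, mul_smul_comm]

/-- For an odd connection form `A` with curvature `F = δA + A²` in a ℤ/2-graded algebra
with odd differential `δ` (`δ² = 0`, graded Leibniz rules), if `F` is nilpotent so that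
the exponential `e^{−F} = Σ (−1)ⁿ Fⁿ/n!` is a finite sum, then
`δ(e^{−F}) = [e^{−F}, A] = e^{−F}A − A e^{−F}`. -/
theorem delta_exp_curvature {R : Type*} [Ring R] [Algebra ℚ R] (δ : R →ₗ[ℚ] R)
    (Ev Od : R → Prop)
    (hd2 : ∀ x : R, δ (δ x) = 0)
    (hE1 : Ev 1)
    (hEmul : ∀ x y : R, Ev x → Ev y → Ev (x * y))
    (hLeibE : ∀ x y : R, Ev x → δ (x * y) = δ x * y + x * δ y)
    (hLeibO : ∀ x y : R, Od x → δ (x * y) = δ x * y - x * δ y)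
    (A : R) (hA : Od A) (hF : Ev (δ A + A * A))
    (N : ℕ) (hN : (δ A + A * A) ^ N = 0) :
    δ (∑ n ∈ Finset.range N, ((-1 : ℚ) ^ n * (n.factorial : ℚ)⁻¹) • (δ A + A * A) ^ n) =
      (∑ n ∈ Finset.range N, ((-1 : ℚ) ^ n * (n.factorial : ℚ)⁻¹) • (δ A + A * A) ^ n) * A -
        A * ∑ n ∈ Finset.range N, ((-1 : ℚ) ^ n * (n.factorial : ℚ)⁻¹) • (δ A + A * A) ^ n :=
  delta_exp_curvature_general δ Ev Od hd2 hE1 hLeibE hLeibO A hA hF N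
end

section
/- Let A be an associative algebra and ΩA the noncommutative forms with operators b, d, κ = 1 − (db+bd), B = (Σ_{i=0}^{n} κⁱ)d on ΩⁿA. Then κ B = B = B κ. -/
/-! The Karoubi operator acts on `ω da` by `κ(ω da) = (-1)^{deg ω} da ω`. Writing a form `y` of
degree `n + 1` as a sum of terms `z dc` and inducting on `n` gives
`κ^{n+1}(ω dy) = (-1)^{(n+1)(deg ω + n)} dy ω`; for `ω = 1` the sign is `+`, so `dx` is a periodic
point of `κ` of period `n + 1`. As `κ` is additive and commutes with `d`, both `κB x` and `B(κx)`
are `∑_{i=1}^{n+1} κⁱ dx`, which periodicity turns back into `B x`. -/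

/-- The Karoubi operator `κ = 1 − (db + bd)`. -/
def kappaOp {Ω : Type*} [Ring Ω] (d b : Ω →+ Ω) : Ω → Ω :=
  fun x => x - (d (b x) + b (d x))

/-- Connes' boundary map `B = (1 + κ + … + κⁿ) ∘ d` on forms of degree `n`. -/
def connesB {Ω : Type*} [Ring Ω] (d b : Ω →+ Ω) (n : ℕ) (x : Ω) : Ω :=
  ∑ i ∈ Finset.range (n + 1), (kappaOp d b)^[i] (d x)

section KaroubiOperator

variable {Ω : Type*} [Ring Ω] (d b : Ω →+ Ω)

def kappaHom : Ω →+ Ω := AddMonoidHom.id Ω - (d.comp b + b.comp d)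

lemma coe_kappaHom : ⇑(kappaHom d b) = kappaOp d b := rfl

lemma kappaOp_connesB (n : ℕ) (x : Ω) :
    kappaOp d b (connesB d b n x) = ∑ i ∈ Finset.range (n + 1), (kappaOp d b)^[i + 1] (d x) := by
  rw [connesB, ← coe_kappaHom, map_sum]
  simp only [Function.iterate_succ_apply']

variable {d b}

lemma d_kappaOp (hd2 : ∀ x : Ω, d (d x) = 0) (x : Ω) :
    d (kappaOp d b x) = kappaOp d b (d x) := by
  simp only [kappaOp, map_sub, map_add, hd2, map_zero]
  abel

lemma connesB_kappaOp (hd2 : ∀ x : Ω, d (d x) = 0) (n : ℕ) (x : Ω) :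
    connesB d b n (kappaOp d b x) = ∑ i ∈ Finset.range (n + 1), (kappaOp d b)^[i + 1] (d x) := by
  simp only [connesB, d_kappaOp hd2, Function.iterate_succ_apply]

end KaroubiOperator

lemma Function.IsPeriodicPt.sum_range_iterate_succ {M : Type*} [AddCommMonoid M] {f : M → M}
    {n : ℕ} {y : M} (h : Function.IsPeriodicPt f (n + 1) y) :
    ∑ i ∈ Finset.range (n + 1), f^[i + 1] y = ∑ i ∈ Finset.range (n + 1), f^[i] y := by
  rw [Finset.sum_range_succ, Finset.sum_range_succ', h.eq, Function.iterate_zero_apply]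

section NoncommutativeForms

variable {Ω : Type*} [Ring Ω] {M : ℕ → AddSubgroup Ω} {d b : Ω →+ Ω}

lemma d_mul_d (hd2 : ∀ x : Ω, d (d x) = 0)
    (hLeib : ∀ {n : ℕ} (x y : Ω), x ∈ M n → d (x * y) = d x * y + ((-1 : ℤ) ^ n) • (x * d y))
    {n : ℕ} {x : Ω} (hx : x ∈ M n) (a : Ω) :
    d (x * d a) = d x * d a := by
  rw [hLeib x (d a) hx, hd2, mul_zero, smul_zero, add_zero]

lemma kappaOp_mul_d (hd : ∀ {n : ℕ} {x : Ω}, x ∈ M n → d x ∈ M (n + 1))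
    (hd2 : ∀ x : Ω, d (d x) = 0)
    (hLeib : ∀ {n : ℕ} (x y : Ω), x ∈ M n → d (x * y) = d x * y + ((-1 : ℤ) ^ n) • (x * d y))
    (hbdef : ∀ {n : ℕ} (x a : Ω), x ∈ M n → a ∈ M 0 →
      b (x * d a) = ((-1 : ℤ) ^ n) • (x * a - a * x))
    {n : ℕ} {x a : Ω} (hx : x ∈ M n) (ha : a ∈ M 0) :
    kappaOp d b (x * d a) = ((-1 : ℤ) ^ n) • (d a * x) := by
  have hbd : b (d (x * d a)) = ((-1 : ℤ) ^ (n + 1)) • (d x * a - a * d x) := by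
    rw [d_mul_d hd2 hLeib hx]
    exact hbdef (d x) a (hd hx) ha
  have hdb : d (b (x * d a)) =
      ((-1 : ℤ) ^ n) • ((d x * a + ((-1 : ℤ) ^ n) • (x * d a)) - (d a * x + a * d x)) := by
    rw [hbdef x a hx ha, map_zsmul, map_sub, hLeib x a hx, hLeib a x ha, pow_zero, one_smul]
  have hsq : ((-1 : ℤ) ^ n) * ((-1 : ℤ) ^ n) = 1 := by
    rw [← pow_add, Even.neg_one_pow ⟨n, rfl⟩]
  rw [kappaOp, hdb, hbd, pow_succ]
  simp only [smul_sub, smul_add, smul_smul, hsq, one_smul, mul_neg, mul_one, neg_smul]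
  abel

lemma iterate_kappaOp_mul_d (hmul : ∀ {i j : ℕ} {x y : Ω}, x ∈ M i → y ∈ M j → x * y ∈ M (i + j))
    (hd : ∀ {n : ℕ} {x : Ω}, x ∈ M n → d x ∈ M (n + 1))
    (hd2 : ∀ x : Ω, d (d x) = 0)
    (hLeib : ∀ {n : ℕ} (x y : Ω), x ∈ M n → d (x * y) = d x * y + ((-1 : ℤ) ^ n) • (x * d y))
    (hbdef : ∀ {n : ℕ} (x a : Ω), x ∈ M n → a ∈ M 0 →
      b (x * d a) = ((-1 : ℤ) ^ n) • (x * a - a * x))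
    (hspan : ∀ n : ℕ, (M (n + 1) : Set Ω) ⊆
      ↑(AddSubgroup.closure {z : Ω | ∃ x ∈ M n, ∃ a ∈ M 0, z = x * d a}))
    (n : ℕ) {m : ℕ} {ω y : Ω} (hω : ω ∈ M m) (hy : y ∈ M n) :
    (kappaOp d b)^[n + 1] (ω * d y) = ((-1 : ℤ) ^ ((n + 1) * (m + n))) • (d y * ω) := by
  induction n generalizing m ω y with
  | zero =>
    simpa using kappaOp_mul_d (M := M) hd hd2 hLeib hbdef hω hy
  | succ n ih =>
    rw [← coe_kappaHom] at ih
    have hy' : y ∈ AddSubgroup.closure _ := hspan n hy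
    clear hy
    induction hy' using AddSubgroup.closure_induction with
    | mem _ hgen =>
      obtain ⟨z, hz, c, hc, rfl⟩ := hgen
      have hdcω : d c * ω ∈ M (m + 1) := by
        simpa only [zero_add, add_comm 1] using hmul (hd hc) hω
      -- one `κ` moves `dc` to the front; the induction hypothesis then applies to `(dc ω) dz`
      rw [Function.iterate_succ_apply, d_mul_d hd2 hLeib hz, ← mul_assoc,
        kappaOp_mul_d (M := M) hd hd2 hLeib hbdef (hmul hω (hd hz)) hc, ← coe_kappaHom,
        iterate_map_zsmul, ← mul_assoc, ih hdcω hz, smul_smul, ← pow_add, mul_assoc]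
      congr 2
      ring
    | zero => simp [← coe_kappaHom]
    | add _ _ _ _ h₁ h₂ =>
      rw [← coe_kappaHom] at h₁ h₂ ⊢
      simp only [map_add, mul_add, add_mul, iterate_map_add, h₁, h₂, smul_add]
    | neg _ _ h =>
      rw [← coe_kappaHom] at h ⊢
      simp only [map_neg, mul_neg, neg_mul, iterate_map_neg, h, smul_neg]

lemma isPeriodicPt_kappaOp_d (h1 : (1 : Ω) ∈ M 0)
    (hmul : ∀ {i j : ℕ} {x y : Ω}, x ∈ M i → y ∈ M j → x * y ∈ M (i + j))
    (hd : ∀ {n : ℕ} {x : Ω}, x ∈ M n → d x ∈ M (n + 1))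
    (hd2 : ∀ x : Ω, d (d x) = 0)
    (hLeib : ∀ {n : ℕ} (x y : Ω), x ∈ M n → d (x * y) = d x * y + ((-1 : ℤ) ^ n) • (x * d y))
    (hbdef : ∀ {n : ℕ} (x a : Ω), x ∈ M n → a ∈ M 0 →
      b (x * d a) = ((-1 : ℤ) ^ n) • (x * a - a * x))
    (hspan : ∀ n : ℕ, (M (n + 1) : Set Ω) ⊆
      ↑(AddSubgroup.closure {z : Ω | ∃ x ∈ M n, ∃ a ∈ M 0, z = x * d a}))
    {n : ℕ} {x : Ω} (hx : x ∈ M n) :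
    Function.IsPeriodicPt (kappaOp d b) (n + 1) (d x) := by
  have hcyc := iterate_kappaOp_mul_d (M := M) hmul hd hd2 hLeib hbdef hspan n h1 hx
  have hev : Even ((n + 1) * (0 + n)) := by
    rw [zero_add, mul_comm]
    exact Nat.even_mul_succ_self n
  rwa [one_mul, mul_one, hev.neg_one_pow, one_smul] at hcyc

end NoncommutativeForms

theorem kappa_B_eq_B_general {Ω : Type*} [Ring Ω] (M : ℕ → AddSubgroup Ω) (d b : Ω →+ Ω)
    (h1 : (1 : Ω) ∈ M 0)
    (hmul : ∀ {i j : ℕ} {x y : Ω}, x ∈ M i → y ∈ M j → x * y ∈ M (i + j))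
    (hd : ∀ {n : ℕ} {x : Ω}, x ∈ M n → d x ∈ M (n + 1))
    (hd2 : ∀ x : Ω, d (d x) = 0)
    (hLeib : ∀ {n : ℕ} (x y : Ω), x ∈ M n → d (x * y) = d x * y + ((-1 : ℤ) ^ n) • (x * d y))
    (hbdef : ∀ {n : ℕ} (x a : Ω), x ∈ M n → a ∈ M 0 →
      b (x * d a) = ((-1 : ℤ) ^ n) • (x * a - a * x))
    (hspan : ∀ n : ℕ, (M (n + 1) : Set Ω) ⊆
      ↑(AddSubgroup.closure {z : Ω | ∃ x ∈ M n, ∃ a ∈ M 0, z = x * d a})) :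
    (∀ (n : ℕ) (x : Ω), x ∈ M n → kappaOp d b (connesB d b n x) = connesB d b n x) ∧
    (∀ (n : ℕ) (x : Ω), x ∈ M n → connesB d b n (kappaOp d b x) = connesB d b n x) := by
  have hper {n : ℕ} {x : Ω} (hx : x ∈ M n) :=
    isPeriodicPt_kappaOp_d h1 hmul hd hd2 hLeib hbdef hspan hx
  refine ⟨fun n x hx => ?_, fun n x hx => ?_⟩
  · rw [kappaOp_connesB, (hper hx).sum_range_iterate_succ, connesB]
  · rw [connesB_kappaOp hd2, (hper hx).sum_range_iterate_succ, connesB]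

/-- In the graded algebra `Ω` of noncommutative differential forms over an algebra
(degree-`n` part `M n`, with `ΩⁿA = Ã ⊗ A^{⊗n}` spanned by forms `ω da` with
`ω ∈ M n`, `a ∈ M 0`), the universal differential `d` (with `d² = 0` and the graded
Leibniz rule) and the Hochschild operator `b` (with `b = 0` in degree `0` and
`b(ω da) = (−1)ⁿ[ω, a]`) satisfy `κB = B = Bκ`, where
`B = (1 + κ + … + κⁿ)d` is Connes' boundary and `κ = 1 − (db + bd)`. -/
theorem kappa_B_eq_B {Ω : Type*} [Ring Ω] (M : ℕ → AddSubgroup Ω) (d b : Ω →+ Ω)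
    (h1 : (1 : Ω) ∈ M 0)
    (hmul : ∀ {i j : ℕ} {x y : Ω}, x ∈ M i → y ∈ M j → x * y ∈ M (i + j))
    (hd : ∀ {n : ℕ} {x : Ω}, x ∈ M n → d x ∈ M (n + 1))
    (hb : ∀ {n : ℕ} {x : Ω}, x ∈ M (n + 1) → b x ∈ M n)
    (hd2 : ∀ x : Ω, d (d x) = 0)
    (hLeib : ∀ {n : ℕ} (x y : Ω), x ∈ M n → d (x * y) = d x * y + ((-1 : ℤ) ^ n) • (x * d y))
    (hb0 : ∀ x ∈ M 0, b x = 0)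
    (hbdef : ∀ {n : ℕ} (x a : Ω), x ∈ M n → a ∈ M 0 →
      b (x * d a) = ((-1 : ℤ) ^ n) • (x * a - a * x))
    (hspan : ∀ n : ℕ, (M (n + 1) : Set Ω) ⊆
      ↑(AddSubgroup.closure {z : Ω | ∃ x ∈ M n, ∃ a ∈ M 0, z = x * d a})) :
    (∀ (n : ℕ) (x : Ω), x ∈ M n → kappaOp d b (connesB d b n x) = connesB d b n x) ∧
    (∀ (n : ℕ) (x : Ω), x ∈ M n → connesB d b n (kappaOp d b x) = connesB d b n x) :=
  kappa_B_eq_B_general M d b h1 hmul hd hd2 hLeib hbdef hspan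
end
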